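/- arXiv:1911.09867 — 3 statements merged into one kernel-verified Lean document; each statement's English description precedes it below -/
import Mathlib

section
/- Let q be a prime power and k ≥ 2. If C is a minimal linear code over GF(q) of length n, dimension k, then n ≥ (q-1)(k-1) + 1 + Σ_{i=1}^{k-1} ⌈((q-1)(k-1)+1)/q^i⌉. -/
/-!
A nonzero codeword `c` of a minimal code of dimension `k` has weight at least `(q-1)(k-1)+1`.
Complete `c` to a basis by `x₁, …, x_{k-1}`. For every nonzero `a` and every `μ` the codeword
`∑ aⱼ xⱼ - μ c` is off the line through `c`, so by minimality its support cannot contain that of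
`c`: some `i` in the support of `c` has `(∑ aⱼ xⱼ)ᵢ / cᵢ = μ`. Normalising against a fixed
coordinate `i₀`, the affine hyperplanes indexed by the other `wt(c) - 1` coordinates cover
`𝔽_q^{k-1} \ {0}` but miss `0`, and Chevalley–Warning (`∑ₐ P(a) = 0` whenever
`deg P < (q-1)(k-1)`) applied to the product of their equations forces `wt(c) - 1 ≥ (q-1)(k-1)`.

The theorem is then the Griesmer bound for `d = (q-1)(k-1)+1`. It follows by induction from the
residual code at a minimum weight codeword `c`, which has dimension `k-1`, length `n - wt(c)` and
minimum distance at least `d/q`: averaging `wt(x - t c)` over `t ∈ 𝔽_q` gives `(q-1) wt(c)`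
plus `q` times the weight of `x` off the support of `c`.
-/

open Finset Module

section Cover

variable {F : Type*} [Field F] [Fintype F]

open MvPolynomial in
theorem sub_one_mul_card_le_card_of_cover {σ ι : Type*} [Fintype σ] [DecidableEq σ]
    (f : ι → Dual F (σ → F)) (s : Finset ι) (hcover : ∀ a ≠ 0, ∃ i ∈ s, f i a = 1) :
    (Fintype.card F - 1) * Fintype.card σ ≤ #s := by
  let P : MvPolynomial σ F :=
    ∏ i ∈ s, ((∑ j, (f i fun k => if j = k then 1 else 0) • X j) - 1)
  have heval (a : σ → F) : eval a P = ∏ i ∈ s, (f i a - 1) := by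
    simp [P, (f _).pi_apply_eq_sum_univ a, mul_comm]
  have hdeg : P.totalDegree ≤ #s := by
    refine (totalDegree_finsetProd _ _).trans ?_
    rw [card_eq_sum_ones]
    refine sum_le_sum fun i _ => (totalDegree_sub_C_le _ 1).trans ?_
    refine (totalDegree_finsetSum _ _).trans (Finset.sup_le fun j _ => ?_)
    exact (totalDegree_smul_le _ _).trans (totalDegree_X j).le
  by_contra! hlt
  have hsum := sum_eval_eq_zero P (hdeg.trans_lt hlt)
  rw [sum_eq_single_of_mem 0 (mem_univ _) fun a _ ha => ?_] at hsum
  · simp only [heval, map_zero, zero_sub] at hsum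
    simp at hsum
  · obtain ⟨i, hi, hfi⟩ := hcover a ha
    rw [heval]
    exact prod_eq_zero hi (by rw [hfi, sub_self])

end Cover

section Griesmer

variable {F : Type*} [Field F] [DecidableEq F] {ι : Type*} [Fintype ι]

lemma hammingNorm_restrict_zeros (x c : ι → F) :
    hammingNorm (fun i : {i // c i = 0} => x i) = #{i | c i = 0 ∧ x i ≠ 0} := by
  rw [hammingNorm, ← Fintype.card_subtype, ← Fintype.card_subtype]
  convert Fintype.card_congr
    (Equiv.subtypeSubtypeEquivSubtypeInter (fun i => c i = 0) (fun i => x i ≠ 0))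

lemma card_zeros_add_hammingNorm (c : ι → F) :
    Fintype.card {i // c i = 0} + hammingNorm c = Fintype.card ι := by
  rw [Fintype.card_subtype, hammingNorm]
  exact card_filter_add_card_filter_not _

def residualCode (C : Submodule F (ι → F)) (c : ι → F) : Submodule F ({i // c i = 0} → F) :=
  C.map (LinearMap.funLeft F F Subtype.val)

structure IsMinWeightCodeword (C : Submodule F (ι → F)) (c : ι → F) : Prop where
  mem : c ∈ C
  ne_zero : c ≠ 0
  le_of_mem : ∀ x ∈ C, x ≠ 0 → hammingNorm c ≤ hammingNorm x

namespace IsMinWeightCodeword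

variable {C : Submodule F (ι → F)} {c : ι → F}

lemma exists_eq_smul (hc : IsMinWeightCodeword C c) {x : ι → F} (hx : x ∈ C)
    (hsupp : ∀ i, c i = 0 → x i = 0) : ∃ μ : F, x = μ • c := by
  obtain ⟨i₀, hi₀⟩ : ∃ i, c i ≠ 0 := Function.ne_iff.1 hc.ne_zero
  refine ⟨x i₀ / c i₀, by_contra fun hne => ?_⟩
  refine (hc.le_of_mem _ (C.sub_mem hx (C.smul_mem _ hc.mem)) (sub_ne_zero.2 hne)).not_gt
    (card_lt_card ((ssubset_iff_of_subset fun i => ?_).2 ⟨i₀, ?_⟩))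
  · simp only [mem_filter, mem_univ, true_and, Pi.sub_apply, Pi.smul_apply, smul_eq_mul]
    exact mt fun hci => by simp [hci, hsupp i hci]
  · simp [hi₀]

lemma finrank_residualCode_add_one (hc : IsMinWeightCodeword C c) :
    finrank F (residualCode C c) + 1 = finrank F C := by
  let g := LinearMap.funLeft F F (Subtype.val : {i // c i = 0} → ι) ∘ₗ C.subtype
  have hrange : LinearMap.range g = residualCode C c := by
    rw [LinearMap.range_comp, Submodule.range_subtype, residualCode]
  have hker : LinearMap.ker g = F ∙ ⟨c, hc.mem⟩ := by
    ext x
    rw [LinearMap.mem_ker, Submodule.mem_span_singleton]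
    constructor
    · intro hx
      obtain ⟨μ, hμ⟩ := hc.exists_eq_smul x.2 fun i hi => congrFun hx ⟨i, hi⟩
      exact ⟨μ, Subtype.ext hμ.symm⟩
    · rintro ⟨μ, rfl⟩
      funext i
      simp [g, LinearMap.funLeft, i.2]
  have := LinearMap.finrank_range_add_finrank_ker g
  rwa [hrange, hker, finrank_span_singleton (by simpa using hc.ne_zero)] at this

end IsMinWeightCodeword

variable [Fintype F]

lemma card_filter_sub_mul_ne_zero (a b : F) :
    #{t : F | a - t * b ≠ 0} =
      (if b ≠ 0 then Fintype.card F - 1 else 0) + if b = 0 ∧ a ≠ 0 then Fintype.card F else 0 := by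
  by_cases hb : b = 0
  · by_cases ha : a = 0 <;> simp [ha, hb]
  · have : ({t : F | a - t * b ≠ 0} : Finset F) = univ.erase (a / b) := by
      ext t
      simp [sub_eq_zero, eq_div_iff hb, eq_comm]
    simp [this, hb, card_univ]

lemma sum_hammingNorm_sub_smul (x c : ι → F) :
    ∑ t : F, hammingNorm (x - t • c) =
      (Fintype.card F - 1) * hammingNorm c +
        Fintype.card F * hammingNorm (fun i : {i // c i = 0} => x i) := by
  rw [hammingNorm_restrict_zeros]
  simp only [hammingNorm, card_filter, Pi.sub_apply, Pi.smul_apply, smul_eq_mul]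
  rw [sum_comm]
  simp only [← card_filter, card_filter_sub_mul_ne_zero, sum_add_distrib]
  simp only [← sum_filter, sum_const, smul_eq_mul, mul_comm]

lemma exists_isMinWeightCodeword {C : Submodule F (ι → F)} (hC : C ≠ ⊥) :
    ∃ c, IsMinWeightCodeword C c := by
  obtain ⟨c, ⟨hc, hc0⟩, hmin⟩ := Set.exists_min_image {x | x ∈ C ∧ x ≠ 0} hammingNorm
    (Set.toFinite _) ((Submodule.ne_bot_iff C).1 hC)
  exact ⟨c, hc, hc0, fun x hx hx0 => hmin x ⟨hx, hx0⟩⟩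

lemma IsMinWeightCodeword.hammingNorm_le_mul_of_mem_residualCode {C : Submodule F (ι → F)}
    {c : ι → F} (hc : IsMinWeightCodeword C c) {y : {i // c i = 0} → F}
    (hy : y ∈ residualCode C c) (hy0 : y ≠ 0) :
    hammingNorm c ≤ Fintype.card F * hammingNorm y := by
  obtain ⟨x, hx, rfl⟩ := hy
  have hlow (t : F) : hammingNorm c ≤ hammingNorm (x - t • c) := by
    refine hc.le_of_mem _ (C.sub_mem hx (C.smul_mem t hc.mem)) fun h => hy0 ?_
    funext i
    simp [LinearMap.funLeft, sub_eq_zero.1 h, i.2]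
  have hsum := sum_hammingNorm_sub_smul x c
  have havg : Fintype.card F * hammingNorm c ≤ ∑ t : F, hammingNorm (x - t • c) := by
    simpa using sum_le_sum fun t (_ : t ∈ univ) => hlow t
  obtain ⟨r, hr⟩ : ∃ r, Fintype.card F = r + 1 :=
    ⟨_, (Nat.succ_pred_eq_of_pos Fintype.card_pos).symm⟩
  rw [hr, Nat.add_sub_cancel] at hsum
  rw [hr] at havg ⊢
  change _ ≤ _ * hammingNorm (fun i : {i // c i = 0} => x i)
  linarith

theorem griesmer_bound (C : Submodule F (ι → F)) (d : ℚ)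
    (hd : ∀ c ∈ C, c ≠ 0 → d ≤ hammingNorm c) :
    ∑ i ∈ range (finrank F C), ⌈d / Fintype.card F ^ i⌉₊ ≤ Fintype.card ι := by
  induction h : finrank F C generalizing ι C d with
  | zero => simp
  | succ k ih =>
    obtain ⟨c, hc⟩ := exists_isMinWeightCodeword (C := C) (by rintro rfl; simp at h)
    have hres := ih (residualCode C c) (d / Fintype.card F) (fun y hy hy0 => by
      rw [div_le_iff₀' (by exact_mod_cast Fintype.card_pos)]
      exact (hd c hc.mem hc.ne_zero).trans
        (by exact_mod_cast hc.hammingNorm_le_mul_of_mem_residualCode hy hy0))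
      (by have := hc.finrank_residualCode_add_one; omega)
    have hfirst : ⌈d / Fintype.card F ^ 0⌉₊ ≤ hammingNorm c := by
      simpa using hd c hc.mem hc.ne_zero
    have hcard := card_zeros_add_hammingNorm c
    simp only [div_div, ← pow_succ'] at hres
    rw [sum_range_succ']
    omega

end Griesmer

lemma Submodule.exists_linearMap_fin_finrank_sub_one {F V : Type*} [Field F] [AddCommGroup V]
    [Module F V] (C : Submodule F V) [FiniteDimensional F C] {c : V} (hc : c ∈ C) (hc0 : c ≠ 0) :
    ∃ ψ : (Fin (finrank F C - 1) → F) →ₗ[F] C, ∀ a, (ψ a : V) ∈ F ∙ c → a = 0 := by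
  let p : Submodule F C := F ∙ ⟨c, hc⟩
  obtain ⟨q, hpq⟩ := p.exists_isCompl
  have hq : finrank F q = finrank F C - 1 := by
    have := Submodule.finrank_add_eq_of_isCompl hpq
    rw [finrank_span_singleton (by simpa using hc0)] at this
    omega
  let b := finBasisOfFinrankEq F q hq
  refine ⟨q.subtype ∘ₗ b.equivFun.symm.toLinearMap, fun a ha => ?_⟩
  obtain ⟨t, ht⟩ := Submodule.mem_span_singleton.1 ha
  have hp : q.subtype (b.equivFun.symm a) ∈ p :=
    Submodule.mem_span_singleton.2 ⟨t, Subtype.ext (by simpa using ht)⟩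
  have h0 := Submodule.disjoint_def.1 hpq.disjoint _ hp (b.equivFun.symm a).2
  exact b.equivFun.symm.map_eq_zero_iff.1
    (by simpa only [Submodule.subtype_apply, ZeroMemClass.coe_eq_zero] using h0)

section MinimalCode

variable {F : Type*} [Field F] {ι : Type*}

def IsMinimalCode (C : Submodule F (ι → F)) : Prop :=
  ∀ c ∈ C, c ≠ 0 → ∀ c' ∈ C, c' ≠ 0 → (∀ i, c' i ≠ 0 → c i ≠ 0) → ∃ lam : F, c' = lam • c

namespace IsMinimalCode

variable {C : Submodule F (ι → F)} {c : ι → F}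

lemma exists_apply_eq_mul (hC : IsMinimalCode C) (hc : c ∈ C) (hc0 : c ≠ 0) {x : ι → F}
    (hx : x ∈ C) (hxc : x ∉ F ∙ c) (μ : F) : ∃ i, c i ≠ 0 ∧ x i = μ * c i := by
  by_contra! hne
  have hz : x - μ • c ≠ 0 := fun h =>
    hxc (Submodule.mem_span_singleton.2 ⟨μ, (sub_eq_zero.1 h).symm⟩)
  obtain ⟨t, ht⟩ := hC _ (C.sub_mem hx (C.smul_mem μ hc)) hz c hc hc0 fun i hi => by
    simpa [sub_eq_zero] using hne i hi
  have ht0 : t ≠ 0 := by rintro rfl; exact hc0 (by simpa using ht)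
  refine hxc (Submodule.mem_span_singleton.2 ⟨μ + t⁻¹, ?_⟩)
  rw [add_smul, (inv_smul_eq_iff₀ ht0).2 ht]
  abel

theorem le_hammingNorm [Fintype F] [DecidableEq F] [Fintype ι] (hC : IsMinimalCode C)
    (hc : c ∈ C) (hc0 : c ≠ 0) :
    (Fintype.card F - 1) * (finrank F C - 1) + 1 ≤ hammingNorm c := by
  classical
  obtain ⟨ψ, hψ⟩ := C.exists_linearMap_fin_finrank_sub_one hc hc0
  obtain ⟨i₀, hi₀⟩ : ∃ i, c i ≠ 0 := Function.ne_iff.1 hc0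
  let coord (i : ι) : Dual F (Fin (finrank F C - 1) → F) :=
    (c i)⁻¹ • (LinearMap.proj i ∘ₗ C.subtype ∘ₗ ψ)
  have hcover : ∀ a ≠ 0,
      ∃ i ∈ ({i | c i ≠ 0} : Finset ι).erase i₀, (coord i - coord i₀) a = 1 := by
    intro a ha
    obtain ⟨i, hi, hxi⟩ := hC.exists_apply_eq_mul hc hc0 (ψ a).2 (fun h => ha (hψ a h))
      (1 + (ψ a : ι → F) i₀ / c i₀)
    refine ⟨i, mem_erase.2 ⟨?_, mem_filter.2 ⟨mem_univ _, hi⟩⟩, ?_⟩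
    · rintro rfl
      rw [add_mul, div_mul_cancel₀ _ hi₀, one_mul] at hxi
      exact hi (by linear_combination -hxi)
    · simp only [coord, LinearMap.sub_apply, LinearMap.smul_apply, LinearMap.comp_apply,
        Submodule.subtype_apply, LinearMap.proj_apply, smul_eq_mul, hxi]
      field_simp
      ring
  have hcard := sub_one_mul_card_le_card_of_cover _ _ hcover
  rw [Fintype.card_fin, card_erase_of_mem (by simpa using hi₀)] at hcard
  have hpos : 0 < #({i | c i ≠ 0} : Finset ι) := hammingNorm_pos_iff.2 hc0
  rw [hammingNorm]
  omega

end IsMinimalCode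

end MinimalCode

theorem stmt_11_general {F : Type} [Field F] [Fintype F]
    (q n k : ℕ) (hq : Fintype.card F = q) (hk : 2 ≤ k)
    (C : Submodule F (Fin n → F)) (hdim : Module.finrank F C = k)
    (hmin : ∀ c ∈ C, c ≠ 0 → ∀ c' ∈ C, c' ≠ 0 →
      (∀ i, c' i ≠ 0 → c i ≠ 0) → ∃ lam : F, c' = lam • c) :
    (q - 1) * (k - 1) + 1 +
      ∑ i ∈ Finset.range (k - 1),
        ⌈(((q - 1) * (k - 1) + 1 : ℕ) : ℚ) / (q : ℚ) ^ (i + 1)⌉₊ ≤ n := by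
  classical
  subst hq hdim
  have hG := griesmer_bound C ((Fintype.card F - 1) * (finrank F C - 1) + 1 : ℕ)
    fun c hc hc0 => by exact_mod_cast IsMinimalCode.le_hammingNorm hmin hc hc0
  obtain ⟨m, hm⟩ : ∃ m, finrank F C = m + 1 := ⟨_, (Nat.sub_add_cancel (by omega)).symm⟩
  rw [hm, Nat.add_sub_cancel, sum_range_succ', pow_zero, div_one, Nat.ceil_natCast,
    Fintype.card_fin] at hG
  rw [hm, Nat.add_sub_cancel]
  omega

theorem stmt_11 {F : Type} [Field F] [Fintype F] [DecidableEq F]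
    (q n k : ℕ) (hq : Fintype.card F = q) (hk : 2 ≤ k)
    (C : Submodule F (Fin n → F)) (hdim : Module.finrank F C = k)
    (hmin : ∀ c ∈ C, c ≠ 0 → ∀ c' ∈ C, c' ≠ 0 →
      (∀ i, c' i ≠ 0 → c i ≠ 0) → ∃ lam : F, c' = lam • c) :
    (q - 1) * (k - 1) + 1 +
      ∑ i ∈ Finset.range (k - 1),
        ⌈(((q - 1) * (k - 1) + 1 : ℕ) : ℚ) / (q : ℚ) ^ (i + 1)⌉₊ ≤ n :=
  stmt_11_general q n k hq hk C hdim hmin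
end

section
/- Let q be a prime power, k ≥ 3, D_1 ⊆ GF(q)^{k-1} and D_2 ⊆ GF(q)^{k-1} a vectorial cutting blocking set. Define E = {(x,1) : x ∈ D_1} ∪ {(x,0) : x ∈ D_2} ⊆ GF(q)^k. Then E is a vectorial cutting blocking set in GF(q)^k if and only if D_1 is an affine blocking set in GF(q)^{k-1} (i.e., D_1 meets every affine hyperplane {x : ⟨a,x⟩ = b}, a ≠ 0). -/
open Module

private lemma aux_ker_finrank {K V : Type*} [Field K] [AddCommGroup V] [Module K V]
    [FiniteDimensional K V] (f : V →ₗ[K] K) {x : V} (hx : f x ≠ 0) :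
    Module.finrank K (LinearMap.ker f) + 1 = Module.finrank K V := by
  have hr : LinearMap.range f = ⊤ := by
    rw [Submodule.eq_top_iff']
    intro c
    exact ⟨(c / f x) • x, by rw [map_smul, smul_eq_mul, div_mul_cancel₀ _ hx]⟩
  have h := LinearMap.finrank_range_add_finrank_ker f
  rw [hr, finrank_top, Module.finrank_self] at h
  omega

private lemma aux_exists_ker {K V : Type*} [Field K] [AddCommGroup V] [Module K V]
    [FiniteDimensional K V] (H : Submodule K V)
    (h : Module.finrank K H + 1 = Module.finrank K V) :
    ∃ f : V →ₗ[K] K, LinearMap.ker f = H := by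
  have hq : Module.finrank K (V ⧸ H) = 1 := by
    have := Submodule.finrank_quotient_add_finrank H
    omega
  have e : (V ⧸ H) ≃ₗ[K] K :=
    LinearEquiv.ofFinrankEq _ _ (by rw [hq, Module.finrank_self])
  refine ⟨e.toLinearMap ∘ₗ H.mkQ, ?_⟩
  rw [LinearMap.ker_comp, LinearEquiv.ker, Submodule.comap_bot, Submodule.ker_mkQ]

private def dotL {K : Type*} [Field K] {n : ℕ} (a : Fin n → K) :
    (Fin n → K) →ₗ[K] K where
  toFun x := ∑ i, a i * x i
  map_add' x y := by simp [mul_add, Finset.sum_add_distrib]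
  map_smul' c x := by simp [Finset.mul_sum, mul_left_comm]

theorem stmt_18 {F : Type} [Field F] [Fintype F] [DecidableEq F]
    (q k : ℕ) (hq : Fintype.card F = q) (hk : 3 ≤ k)
    (D1 D2 : Set (Fin (k - 1) → F))
    (h2 : ∀ H : Submodule F (Fin (k - 1) → F), Module.finrank F H = k - 2 →
      Submodule.span F (D2 ∩ (H : Set (Fin (k - 1) → F))) = H) :
    (∀ H : Submodule F ((Fin (k - 1) → F) × F), Module.finrank F H = k - 1 →
        Submodule.span F
          (({p : (Fin (k - 1) → F) × F |
              (p.2 = 1 ∧ p.1 ∈ D1) ∨ (p.2 = 0 ∧ p.1 ∈ D2)})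
            ∩ (H : Set ((Fin (k - 1) → F) × F))) = H)
      ↔ (∀ a : Fin (k - 1) → F, a ≠ 0 → ∀ b : F, ∃ x ∈ D1, ∑ i, a i * x i = b) := by
  have hW : Module.finrank F ((Fin (k - 1) → F) × F) = k := by
    rw [Module.finrank_prod, Module.finrank_pi, Module.finrank_self, Fintype.card_fin]
    omega
  have hV : Module.finrank F (Fin (k - 1) → F) = k - 1 := by
    rw [Module.finrank_pi, Fintype.card_fin]
  constructor
  · -- forward direction
    intro hE a ha b
    obtain ⟨j, hj⟩ := Function.ne_iff.mp ha
    simp only [Pi.zero_apply] at hj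
    have hsum : ∀ c : F, (∑ i, a i * (Pi.single j c : Fin (k - 1) → F) i) = a j * c := by
      intro c
      rw [Finset.sum_eq_single j]
      · simp
      · intro i _ hij; simp [Pi.single_eq_of_ne hij]
      · simp
    set f : ((Fin (k - 1) → F) × F) →ₗ[F] F :=
      dotL a ∘ₗ LinearMap.fst F _ F - b • LinearMap.snd F (Fin (k - 1) → F) F with hf
    have hfapp : ∀ p : (Fin (k - 1) → F) × F, f p = (∑ i, a i * p.1 i) - b * p.2 :=
      fun p => rfl
    have hfx : f (Pi.single j 1, 0) ≠ 0 := by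
      rw [hfapp, hsum]
      simpa using hj
    have hker : Module.finrank F (LinearMap.ker f) = k - 1 := by
      have h1 := aux_ker_finrank f hfx
      rw [hW] at h1
      omega
    have hspan := hE (LinearMap.ker f) hker
    by_contra hno
    push_neg at hno
    have hle : LinearMap.ker f ≤ LinearMap.ker (LinearMap.snd F (Fin (k - 1) → F) F) := by
      rw [← hspan]
      apply Submodule.span_le.mpr
      rintro p ⟨hpE, hpH⟩
      rcases hpE with ⟨h1, hD⟩ | ⟨h0, _⟩
      · exfalso
        have hmem : p ∈ LinearMap.ker f := hpH
        rw [LinearMap.mem_ker, hfapp, h1, mul_one, sub_eq_zero] at hmem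
        exact hno p.1 hD hmem
      · simp [LinearMap.mem_ker, h0]
    have hmem : ((Pi.single j (b / a j) : Fin (k - 1) → F), (1 : F)) ∈ LinearMap.ker f := by
      rw [LinearMap.mem_ker, hfapp, hsum, mul_div_cancel₀ _ hj, mul_one, sub_self]
    simpa using hle hmem
  · -- backward direction
    intro hD1 H hH
    obtain ⟨f, hfk⟩ := aux_exists_ker H (by omega)
    set g : (Fin (k - 1) → F) →ₗ[F] F := f ∘ₗ LinearMap.inl F _ F with hgdef
    set c : F := f (0, 1) with hc
    have hfdec : ∀ p : (Fin (k - 1) → F) × F, f p = g p.1 + p.2 * c := by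
      intro p
      have hp : p = (p.1, 0) + p.2 • ((0 : Fin (k - 1) → F), (1 : F)) := by
        ext <;> simp
      calc f p = f ((p.1, 0) + p.2 • ((0 : Fin (k - 1) → F), (1 : F))) := by rw [← hp]
        _ = f (p.1, 0) + p.2 • f (0, 1) := by rw [map_add, map_smul]
        _ = g p.1 + p.2 * c := by rw [hgdef, hc]; simp [LinearMap.inl_apply]
    have hsub : Submodule.span F
        (({p : (Fin (k - 1) → F) × F |
            (p.2 = 1 ∧ p.1 ∈ D1) ∨ (p.2 = 0 ∧ p.1 ∈ D2)})
          ∩ (H : Set ((Fin (k - 1) → F) × F))) ≤ H :=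
      Submodule.span_le.mpr Set.inter_subset_right
    refine le_antisymm hsub ?_
    by_cases hgz : ∀ x, g x = 0
    · -- case g = 0 : H is the hyperplane at infinity
      have hc0 : c ≠ 0 := by
        intro h0
        have hT : H = ⊤ := by
          rw [← hfk, Submodule.eq_top_iff']
          intro p
          rw [LinearMap.mem_ker, hfdec, hgz, h0, mul_zero, add_zero]
        rw [hT, finrank_top, hW] at hH
        omega
      have hsnd : (LinearMap.snd F (Fin (k - 1) → F) F) ((0 : Fin (k - 1) → F), (1 : F)) ≠ 0 := by
        simp
      have h1 := aux_ker_finrank _ hsnd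
      rw [hW] at h1
      have hHsnd : H = LinearMap.ker (LinearMap.snd F (Fin (k - 1) → F) F) := by
        refine Submodule.eq_of_le_of_finrank_eq ?_ ?_
        · intro p hp
          rw [← hfk, LinearMap.mem_ker, hfdec, hgz, zero_add] at hp
          have hp2 : p.2 = 0 := (mul_eq_zero.mp hp).resolve_right hc0
          simpa [LinearMap.mem_ker] using hp2
        · rw [hH]; omega
      have hspanD2 : Submodule.span F D2 = ⊤ := by
        rw [Submodule.eq_top_iff']
        intro x
        rw [← Finset.univ_sum_single x]
        refine Submodule.sum_mem _ fun i _ => ?_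
        have hx1 : (Pi.single i (x i) : Fin (k - 1) → F) =
            x i • (Pi.single i (1 : F) : Fin (k - 1) → F) := by
          funext j'
          simp [Pi.single_apply, Pi.smul_apply, smul_eq_mul, mul_ite]
        rw [hx1]
        refine Submodule.smul_mem _ _ ?_
        set j : Fin (k - 1) := if i.val = 0 then ⟨1, by omega⟩ else ⟨0, by omega⟩ with hjdef
        have hij : j ≠ i := by
          have hjv : j.val ≠ i.val := by
            rw [hjdef]
            split_ifs with h
            · show (1 : ℕ) ≠ (i : ℕ); omega
            · show (0 : ℕ) ≠ (i : ℕ); omega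
          exact fun he => hjv (by rw [he])
        have hproj : (LinearMap.proj j : (Fin (k - 1) → F) →ₗ[F] F) (Pi.single j 1) ≠ 0 := by
          simp
        have hp1 := aux_ker_finrank _ hproj
        rw [hV] at hp1
        have hspan2 := h2 (LinearMap.ker (LinearMap.proj j)) (by omega)
        have hmem : (Pi.single i 1 : Fin (k - 1) → F) ∈
            LinearMap.ker (LinearMap.proj j : (Fin (k - 1) → F) →ₗ[F] F) := by
          rw [LinearMap.mem_ker, LinearMap.proj_apply]
          exact Pi.single_eq_of_ne hij 1
        rw [← hspan2] at hmem
        exact Submodule.span_mono Set.inter_subset_left hmem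
      intro p hp
      rw [hHsnd, LinearMap.mem_ker, LinearMap.snd_apply] at hp
      have hpe : p = (p.1, (0 : F)) := by
        rw [Prod.ext_iff]; exact ⟨rfl, hp⟩
      have hmem1 : p.1 ∈ Submodule.span F D2 := by rw [hspanD2]; trivial
      have hmem2 : (p.1, (0 : F)) ∈
          Submodule.map (LinearMap.inl F (Fin (k - 1) → F) F) (Submodule.span F D2) :=
        ⟨p.1, hmem1, rfl⟩
      rw [← Submodule.span_image] at hmem2
      rw [hpe]
      refine Submodule.span_mono ?_ hmem2
      rintro _ ⟨z, hz, rfl⟩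
      refine ⟨Or.inr ⟨rfl, hz⟩, ?_⟩
      rw [hHsnd]
      simp [LinearMap.mem_ker]
    · -- case g ≠ 0
      push_neg at hgz
      obtain ⟨w, hw⟩ := hgz
      set a : Fin (k - 1) → F := fun i => g (Pi.single i 1) with ha
      have hgsum : ∀ x, g x = ∑ i, a i * x i := by
        intro x
        rw [LinearMap.pi_apply_eq_sum_univ g x]
        refine Finset.sum_congr rfl fun i _ => ?_
        have hsing : (fun j' => if i = j' then (1 : F) else 0) = Pi.single i 1 := by
          funext j'; simp [Pi.single_apply, eq_comm]
        rw [hsing, smul_eq_mul, mul_comm]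
      have hanez : a ≠ 0 := by
        intro h0
        apply hw
        rw [hgsum, h0]; simp
      obtain ⟨x0, hx0D, hx0⟩ := hD1 a hanez (-c)
      have hgx0 : g x0 = -c := by rw [hgsum]; exact hx0
      have hx0H : ((x0, (1 : F)) : (Fin (k - 1) → F) × F) ∈ H := by
        rw [← hfk, LinearMap.mem_ker, hfdec]
        simp [hgx0]
      have hx0E : ((x0, (1 : F)) : (Fin (k - 1) → F) × F) ∈
          ({p : (Fin (k - 1) → F) × F |
            (p.2 = 1 ∧ p.1 ∈ D1) ∨ (p.2 = 0 ∧ p.1 ∈ D2)}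
          ∩ (H : Set ((Fin (k - 1) → F) × F))) := ⟨Or.inl ⟨rfl, hx0D⟩, hx0H⟩
      have h1 := aux_ker_finrank g hw
      rw [hV] at h1
      have hspanK := h2 (LinearMap.ker g) (by omega)
      intro p hp
      rw [← hfk, LinearMap.mem_ker, hfdec] at hp
      have hy : g (p.1 - p.2 • x0) = 0 := by
        rw [map_sub, map_smul, hgx0, smul_eq_mul, mul_neg, sub_neg_eq_add]
        exact hp
      have hyK : (p.1 - p.2 • x0) ∈ LinearMap.ker g := hy
      rw [← hspanK] at hyK
      have hymem : ((p.1 - p.2 • x0, (0 : F)) : (Fin (k - 1) → F) × F) ∈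
          Submodule.span F
            (({p : (Fin (k - 1) → F) × F |
                (p.2 = 1 ∧ p.1 ∈ D1) ∨ (p.2 = 0 ∧ p.1 ∈ D2)})
              ∩ (H : Set ((Fin (k - 1) → F) × F))) := by
        have hmm : ((p.1 - p.2 • x0, (0 : F)) : (Fin (k - 1) → F) × F) ∈
            Submodule.map (LinearMap.inl F (Fin (k - 1) → F) F)
              (Submodule.span F (D2 ∩ (LinearMap.ker g : Set (Fin (k - 1) → F)))) :=
          ⟨_, hyK, rfl⟩
        rw [← Submodule.span_image] at hmm
        refine Submodule.span_mono ?_ hmm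
        rintro _ ⟨z, ⟨hzD, hzK⟩, rfl⟩
        refine ⟨Or.inr ⟨rfl, hzD⟩, ?_⟩
        have hzg : g z = 0 := hzK
        show ((z, (0 : F)) : (Fin (k - 1) → F) × F) ∈ H
        rw [← hfk, LinearMap.mem_ker, hfdec]
        simp [hzg]
      have hpe : p = p.2 • ((x0, (1 : F)) : (Fin (k - 1) → F) × F) + (p.1 - p.2 • x0, (0 : F)) := by
        refine Prod.ext ?_ ?_
        · show p.1 = p.2 • x0 + (p.1 - p.2 • x0); abel
        · show p.2 = p.2 * 1 + 0; ring
      rw [hpe]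
      exact Submodule.add_mem _
        (Submodule.smul_mem _ _ (Submodule.subset_span hx0E)) hymem
end

section
/- Let q be a prime power and k ≥ 3. Let D = {(x_1,...,x_k) ∈ GF(q)^k \ {0} : x_1 x_2 x_3 (x_1 + x_2 + x_3) = 0} and n = #D = 4q^{k-1} - 6q^{k-2} + 3q^{k-3} - 1. Then for every nonzero a ∈ GF(q)^k, the number of x ∈ D with ⟨a,x⟩ ≠ 0 is at least 3q^{k-1} - 6q^{k-2} + 3q^{k-3}, with equality attained (e.g., for a = e_1). -/
/-!
Splitting off the first three coordinates, `D ∪ {0}` is `Z × F^(k-3)`, where `Z ⊆ F³` is the zero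
set of `x₁x₂x₃(x₁ + x₂ + x₃)`. Over `x₁ = 0` the fibre of `Z` is all of `F²`; over `x₁ = a ≠ 0` it
is the union of the lines `x₂ = 0`, `x₃ = 0`, `x₂ + x₃ = -a`, which meet pairwise in three distinct
points, so it has `3(q - 1)` points. Hence `#Z = q² + 3(q - 1)²`. A hyperplane `⟨a, x⟩ = 0` has
`q^(k-1) - 1` nonzero points, so at most that many points of `D` are lost, which is the lower
bound; for `a = e₁` the points of `D` that remain are those of `Z × F^(k-3)` with `x₁ ≠ 0`,
`3(q - 1)² q^(k-3)` of them.
-/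

def stmt19D (F : Type) [Field F] [Fintype F] [DecidableEq F] (k : ℕ) : Set (Fin k → F) :=
  {x | x ≠ 0 ∧
    (∏ i ∈ Finset.univ.filter (fun i : Fin k => (i : ℕ) < 3), x i) *
      (∑ i ∈ Finset.univ.filter (fun i : Fin k => (i : ℕ) < 3), x i) = 0}

open Finset

theorem Set.ncard_setOf_eq_card_filter {α : Type*} [Fintype α] (p : α → Prop) [DecidablePred p] :
    {x | p x}.ncard = #{x | p x} := by
  rw [← Finset.coe_filter_univ, Set.ncard_coe_finset]

theorem Set.ncard_setOf_comp_castAdd {α : Type*} {n : ℕ} (m : ℕ) (P : (Fin n → α) → Prop) :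
    {x : Fin (n + m) → α | P fun i => x (Fin.castAdd m i)}.ncard =
      {y | P y}.ncard * Nat.card α ^ m := by
  have : {x : Fin (n + m) → α | P fun i => x (Fin.castAdd m i)} =
      Fin.appendEquiv n m '' ({y | P y} ×ˢ Set.univ) := by
    ext x
    simp [Equiv.image_eq_preimage_symm]
  rw [this, Set.ncard_image_of_injective _ (Fin.appendEquiv n m).injective, Set.ncard_prod,
    Set.ncard_univ, Nat.card_fun, Nat.card_fin]

theorem ncard_setOf_dotProduct_eq_zero {K ι : Type*} [Field K] [Finite K] [Fintype ι]
    [DecidableEq ι] {a : ι → K} (ha : a ≠ 0) :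
    {x : ι → K | a ⬝ᵥ x = 0}.ncard = Nat.card K ^ (Fintype.card ι - 1) := by
  set f := dotProductEquiv K ι a
  have hf : f ≠ 0 := (LinearEquiv.map_ne_zero_iff _).mpr ha
  have hrank := f.finrank_ker_add_one_of_ne_zero hf
  rw [Module.finrank_fintype_fun_eq_card] at hrank
  rw [← Nat.card_coe_set_eq, show {x : ι → K | a ⬝ᵥ x = 0} = LinearMap.ker f from rfl,
    SetLike.coe_sort_coe, Module.natCard_eq_pow_finrank (K := K), ← hrank, Nat.add_sub_cancel]

theorem ncard_add_one_le_ncard_setOf_dotProduct_ne_zero {K ι : Type*} [Field K] [Finite K]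
    [Fintype ι] [DecidableEq ι] {a : ι → K} (ha : a ≠ 0) {s : Set (ι → K)} (hs : 0 ∉ s) :
    s.ncard + 1 ≤ {x ∈ s | a ⬝ᵥ x ≠ 0}.ncard + Nat.card K ^ (Fintype.card ι - 1) := by
  set H := {x : ι → K | a ⬝ᵥ x = 0}
  have hsH : s ∩ H ⊆ H \ {0} := fun x hx => ⟨hx.2, fun h => hs (h ▸ hx.1)⟩
  have hH : (H \ {0}).ncard + 1 = H.ncard := Set.ncard_sdiff_singleton_add_one (by simp [H])
  rw [← Set.ncard_inter_add_ncard_sdiff_eq_ncard s H, ← ncard_setOf_dotProduct_eq_zero ha, ← hH]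
  have hdiff : s \ H = {x ∈ s | a ⬝ᵥ x ≠ 0} := rfl
  rw [hdiff]
  have := Set.ncard_le_ncard hsH
  omega

theorem card_filter_prod_eq_sum {α β : Type*} [Fintype α] [Fintype β] (P : α × β → Prop)
    [DecidablePred P] : #{p | P p} = ∑ a, #{b | P (a, b)} := by
  simp only [card_filter, Fintype.sum_prod_type]

theorem card_filter_finThree {α : Type*} [Fintype α] (P : α × α × α → Prop)
    [DecidablePred P] : #{y : Fin 3 → α | P (y 0, y 1, y 2)} = #{p | P p} := by
  refine card_nbij' (fun y => (y 0, y 1, y 2)) (fun p => ![p.1, p.2.1, p.2.2]) ?_ ?_ ?_ ?_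
  · intro y hy
    simpa using hy
  · intro p hp
    simpa using hp
  · intro y _
    funext i
    fin_cases i <;> rfl
  · intro p _
    rfl

theorem Fin.filter_val_lt_eq_map_castAddEmb (n m : ℕ) :
    ({i : Fin (n + m) | (i : ℕ) < n} : Finset _) = univ.map (Fin.castAddEmb m) := by
  ext i
  simp only [mem_filter, mem_univ, true_and, mem_map, Fin.coe_castAddEmb]
  exact ⟨fun h => ⟨⟨i, h⟩, rfl⟩, by rintro ⟨j, rfl⟩; exact j.isLt⟩

section FieldCounts

variable {F : Type*} [Field F] [Fintype F] [DecidableEq F]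

theorem sum_eq_apply_zero_add_smul_of_ne_zero {M : Type*} [AddCommMonoid M] (g : F → M) {c : M}
    (hg : ∀ a ≠ 0, g a = c) : ∑ a, g a = g 0 + (Fintype.card F - 1) • c := by
  rw [← add_sum_erase _ _ (mem_univ 0), sum_congr rfl fun a ha => hg a (ne_of_mem_erase ha),
    sum_const, card_erase_of_mem (mem_univ 0), card_univ]

theorem card_mul_add_self_eq_zero (s : F) :
    #{c : F | c * (s + c) = 0} = if s = 0 then 1 else 2 := by
  have : ({c : F | c * (s + c) = 0} : Finset F) = {0, -s} := by
    ext c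
    simp [mul_eq_zero, add_eq_zero_iff_neg_eq, eq_comm]
  rw [this]
  split_ifs with hs
  · simp [hs]
  · exact card_pair (by simpa [eq_comm] using hs)

theorem card_mul_mul_add_add_eq_zero {a : F} (ha : a ≠ 0) :
    #{p : F × F | p.1 * p.2 * (a + p.1 + p.2) = 0} = 3 * (Fintype.card F - 1) := by
  have hq : 2 ≤ Fintype.card F := Fintype.one_lt_card
  have hfiber : ∀ b ≠ 0, #{c : F | b * c * (a + b + c) = 0} = if b = -a then 1 else 2 := by
    intro b hb
    rw [filter_congr fun c _ => by rw [mul_assoc, mul_eq_zero, or_iff_right hb],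
      card_mul_add_self_eq_zero]
    simp [add_eq_zero_iff_eq_neg']
  have hna : -a ∈ univ.erase 0 := mem_erase.mpr ⟨neg_ne_zero.mpr ha, mem_univ _⟩
  have hrest : ∀ b ∈ (univ.erase 0).erase (-a), #{c : F | b * c * (a + b + c) = 0} = 2 := by
    intro b hb
    rw [hfiber b (ne_of_mem_erase (mem_of_mem_erase hb)), if_neg (ne_of_mem_erase hb)]
  rw [card_filter_prod_eq_sum, ← add_sum_erase _ _ (mem_univ 0), ← add_sum_erase _ _ hna,
    hfiber _ (neg_ne_zero.mpr ha), if_pos rfl, sum_congr rfl hrest, sum_const,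
    card_erase_of_mem hna, card_erase_of_mem (mem_univ 0), card_univ]
  simp only [zero_mul, filter_true, card_univ, smul_eq_mul]
  omega

theorem card_ne_zero_and_mul_mul_mul_add_add_eq_zero :
    #{p : F × F × F | p.1 ≠ 0 ∧ p.1 * p.2.1 * p.2.2 * (p.1 + p.2.1 + p.2.2) = 0} =
      3 * (Fintype.card F - 1) ^ 2 := by
  rw [card_filter_prod_eq_sum, sum_eq_apply_zero_add_smul_of_ne_zero _ (c := 3 * (Fintype.card F - 1))]
  · simp only [ne_eq, not_true_eq_false, false_and, filter_false, card_empty, smul_eq_mul]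
    ring
  · intro a ha
    rw [← card_mul_mul_add_add_eq_zero ha]
    congr 1
    ext p
    simp [ha, mul_assoc]

theorem card_mul_mul_mul_add_add_eq_zero :
    #{p : F × F × F | p.1 * p.2.1 * p.2.2 * (p.1 + p.2.1 + p.2.2) = 0} =
      Fintype.card F ^ 2 + 3 * (Fintype.card F - 1) ^ 2 := by
  rw [card_filter_prod_eq_sum, sum_eq_apply_zero_add_smul_of_ne_zero _ (c := 3 * (Fintype.card F - 1))]
  · simp only [zero_mul, filter_true, card_univ, Fintype.card_prod, smul_eq_mul]
    ring
  · intro a ha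
    rw [← card_mul_mul_add_add_eq_zero ha]
    congr 1
    ext p
    simp [ha, mul_assoc]

theorem ncard_prod_mul_sum_eq_zero :
    {y : Fin 3 → F | (∏ i, y i) * ∑ i, y i = 0}.ncard =
      Fintype.card F ^ 2 + 3 * (Fintype.card F - 1) ^ 2 := by
  simp only [Set.ncard_setOf_eq_card_filter, Fin.prod_univ_three, Fin.sum_univ_three]
  exact (card_filter_finThree fun p : F × F × F => _).trans card_mul_mul_mul_add_add_eq_zero

theorem ncard_ne_zero_and_prod_mul_sum_eq_zero :
    {y : Fin 3 → F | y 0 ≠ 0 ∧ (∏ i, y i) * ∑ i, y i = 0}.ncard =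
      3 * (Fintype.card F - 1) ^ 2 := by
  simp only [Set.ncard_setOf_eq_card_filter, Fin.prod_univ_three, Fin.sum_univ_three]
  exact (card_filter_finThree fun p : F × F × F => _).trans
    card_ne_zero_and_mul_mul_mul_add_add_eq_zero

end FieldCounts

section stmt19D

variable {F : Type} [Field F] [Fintype F] [DecidableEq F]

theorem stmt19D_eq (m : ℕ) : stmt19D F (3 + m) =
    {x | (∏ i, x (Fin.castAdd m i)) * ∑ i, x (Fin.castAdd m i) = 0} \ {0} := by
  ext x
  simp only [stmt19D, Fin.filter_val_lt_eq_map_castAddEmb, prod_map, sum_map]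
  exact and_comm

theorem ncard_stmt19D_add_one (m : ℕ) :
    (stmt19D F (3 + m)).ncard + 1 =
      (Fintype.card F ^ 2 + 3 * (Fintype.card F - 1) ^ 2) * Fintype.card F ^ m := by
  rw [stmt19D_eq, Set.ncard_sdiff_singleton_add_one (by simp),
    Set.ncard_setOf_comp_castAdd m fun y => (∏ i, y i) * ∑ i, y i = 0,
    ncard_prod_mul_sum_eq_zero, Nat.card_eq_fintype_card]

theorem ncard_stmt19D_first_coord_ne_zero (m : ℕ) :
    {x | x ∈ stmt19D F (3 + m) ∧
        ∑ i : Fin (3 + m), (if (i : ℕ) = 0 then (1 : F) else 0) * x i ≠ 0}.ncard =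
      3 * (Fintype.card F - 1) ^ 2 * Fintype.card F ^ m := by
  have hsum (x : Fin (3 + m) → F) :
      ∑ i : Fin (3 + m), (if (i : ℕ) = 0 then (1 : F) else 0) * x i = x (Fin.castAdd m 0) := by
    simp only [Fin.val_eq_zero_iff, ite_mul, one_mul, zero_mul, sum_ite_eq', mem_univ,
      if_true]
    rfl
  have hset : {x | x ∈ stmt19D F (3 + m) ∧
      ∑ i : Fin (3 + m), (if (i : ℕ) = 0 then (1 : F) else 0) * x i ≠ 0} =
      {x | x (Fin.castAdd m 0) ≠ 0 ∧
        (∏ i, x (Fin.castAdd m i)) * ∑ i, x (Fin.castAdd m i) = 0} := by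
    ext x
    simp only [stmt19D_eq, hsum, Set.mem_sdiff, Set.mem_ofPred_eq, Set.mem_singleton_iff]
    exact ⟨fun h => ⟨h.2, h.1.1⟩, fun h => ⟨⟨h.2, fun hx => h.1 (by simp [hx])⟩, h.1⟩⟩
  rw [hset, Set.ncard_setOf_comp_castAdd m fun y => y 0 ≠ 0 ∧ (∏ i, y i) * ∑ i, y i = 0,
    ncard_ne_zero_and_prod_mul_sum_eq_zero, Nat.card_eq_fintype_card]

end stmt19D

theorem stmt_19 {F : Type} [Field F] [Fintype F] [DecidableEq F]
    (q k : ℕ) (hq : Fintype.card F = q) (hk : 3 ≤ k) :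
    (Set.ncard (stmt19D F k) : ℤ) =
        4 * (q : ℤ) ^ (k - 1) - 6 * (q : ℤ) ^ (k - 2) + 3 * (q : ℤ) ^ (k - 3) - 1 ∧
    (∀ a : Fin k → F, a ≠ 0 →
      3 * (q : ℤ) ^ (k - 1) - 6 * (q : ℤ) ^ (k - 2) + 3 * (q : ℤ) ^ (k - 3) ≤
        (Set.ncard {x : Fin k → F | x ∈ stmt19D F k ∧ ∑ i : Fin k, a i * x i ≠ 0} : ℤ)) ∧
    (Set.ncard {x : Fin k → F | x ∈ stmt19D F k ∧
        ∑ i : Fin k, (if (i : ℕ) = 0 then (1 : F) else 0) * x i ≠ 0} : ℤ) =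
      3 * (q : ℤ) ^ (k - 1) - 6 * (q : ℤ) ^ (k - 2) + 3 * (q : ℤ) ^ (k - 3) := by
  subst hq
  obtain ⟨m, rfl⟩ := Nat.exists_eq_add_of_le hk
  have hq : 1 ≤ Fintype.card F := Fintype.card_pos
  have hD := ncard_stmt19D_add_one (F := F) m
  rw [show 3 + m - 1 = m + 2 by omega, show 3 + m - 2 = m + 1 by omega,
    show 3 + m - 3 = m by omega]
  zify [hq] at hD
  refine ⟨by linear_combination hD, fun a ha => ?_, ?_⟩
  · have hle := ncard_add_one_le_ncard_setOf_dotProduct_ne_zero ha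
      (s := stmt19D F (3 + m)) fun h => h.1 rfl
    rw [Fintype.card_fin, Nat.card_eq_fintype_card, show 3 + m - 1 = m + 2 by omega] at hle
    zify at hle
    change _ ≤ (({x ∈ stmt19D F (3 + m) | a ⬝ᵥ x ≠ 0} : Set _).ncard : ℤ)
    linear_combination hle - hD
  · rw [ncard_stmt19D_first_coord_ne_zero]
    push_cast [hq]
    ring
end
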